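/- arXiv:2502.12661 — 4 statements merged into one kernel-verified Lean document; each statement's English description precedes it below -/
import Mathlib

section
/- Under the assumptions r > 0, σ > 0, μ₀ < μ₁ < r, I > 0, with βᵢ > 1 the root of (1/2)σ²β(β−1) + μᵢβ − r = 0 and xᵢ* := (βᵢ/(βᵢ−1))(r−μᵢ)I, one has xᵢ* = (r + (1/2)σ²βᵢ)I for i ∈ {0,1}, and consequently x₀* > x₁* ≥ rI. -/
/-- xᵢ* = (βᵢ/(βᵢ−1))(r−μᵢ)I equals (r + (1/2)σ²βᵢ)I for i = 0,1,
and consequently x₀* > x₁* ≥ rI. -/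
theorem thresholds_identity_and_order (r σ μ₀ μ₁ I β₀ β₁ : ℝ)
    (hr : 0 < r) (hσ : 0 < σ) (hμ : μ₀ < μ₁) (hμr : μ₁ < r) (hI : 0 < I)
    (hβ₀ : 1 < β₀) (h₀ : (1/2) * σ^2 * β₀ * (β₀ - 1) + μ₀ * β₀ - r = 0)
    (hβ₁ : 1 < β₁) (h₁ : (1/2) * σ^2 * β₁ * (β₁ - 1) + μ₁ * β₁ - r = 0) :
    (β₀/(β₀-1)) * (r-μ₀) * I = (r + (1/2) * σ^2 * β₀) * I ∧
    (β₁/(β₁-1)) * (r-μ₁) * I = (r + (1/2) * σ^2 * β₁) * I ∧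
    (β₀/(β₀-1)) * (r-μ₀) * I > (β₁/(β₁-1)) * (r-μ₁) * I ∧
    (β₁/(β₁-1)) * (r-μ₁) * I ≥ r * I := by
  have hσ2 : 0 < σ^2 := by positivity
  have hd₀ : β₀ - 1 ≠ 0 := by linarith
  have hd₁ : β₁ - 1 ≠ 0 := by linarith
  have id₀ : (β₀/(β₀-1)) * (r-μ₀) * I = (r + (1/2) * σ^2 * β₀) * I := by
    field_simp
    nlinarith [h₀]
  have id₁ : (β₁/(β₁-1)) * (r-μ₁) * I = (r + (1/2) * σ^2 * β₁) * I := by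
    field_simp
    nlinarith [h₁]
  have hββ : β₁ < β₀ := by
    nlinarith [mul_pos (sub_pos.mpr hμ) (lt_trans one_pos hβ₁),
      mul_pos hσ2 (mul_pos (lt_trans one_pos hβ₀) (lt_trans one_pos hβ₁)),
      sq_nonneg (β₀ - β₁), sq_nonneg (β₀ + β₁)]
  refine ⟨id₀, id₁, ?_, ?_⟩
  · rw [id₀, id₁]
    have : (1/2) * σ^2 * β₁ < (1/2) * σ^2 * β₀ := by nlinarith
    nlinarith
  · rw [id₁]
    nlinarith [mul_pos (mul_pos hσ2 (lt_trans one_pos hβ₁)) hI]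
end

section
/- The function b̲ : [0,1] → ℝ defined by b̲(π) = (β₀(1−π) + β₁π) I / ((β₀−1)(1−π)/(r−μ₀) + (β₁−1)π/(r−μ₁)) is (strictly, on [0,1]) decreasing, continuous, satisfies b̲(0) = x₀*, b̲(1) = x₁*, and b̲([0,1]) = [x₁*, x₀*]. -/
/-- The lower bound function b̲ is strictly decreasing and continuous
on [0,1], with b̲(0) = x₀*, b̲(1) = x₁* and image [x₁*, x₀*]. -/
theorem lower_bound_properties (r σ μ₀ μ₁ I β₀ β₁ : ℝ)
    (hr : 0 < r) (hσ : 0 < σ) (hμ : μ₀ < μ₁) (hμr : μ₁ < r) (hI : 0 < I)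
    (hβ : β₀ > β₁) (hβ₁ : 1 < β₁)
    (h₀ : (1/2) * σ^2 * β₀ * (β₀ - 1) + μ₀ * β₀ - r = 0)
    (h₁ : (1/2) * σ^2 * β₁ * (β₁ - 1) + μ₁ * β₁ - r = 0)
    (b : ℝ → ℝ)
    (hb : ∀ π : ℝ, b π =
      (β₀ * (1 - π) + β₁ * π) * I /
        ((β₀ - 1) * (1 - π)/(r - μ₀) + (β₁ - 1) * π/(r - μ₁))) :
    StrictAntiOn b (Set.Icc 0 1) ∧
    ContinuousOn b (Set.Icc 0 1) ∧
    b 0 = (β₀/(β₀-1)) * (r-μ₀) * I ∧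
    b 1 = (β₁/(β₁-1)) * (r-μ₁) * I ∧
    b '' Set.Icc 0 1 = Set.Icc ((β₁/(β₁-1)) * (r-μ₁) * I) ((β₀/(β₀-1)) * (r-μ₀) * I) := by
  have hrμ0 : (0:ℝ) < r - μ₀ := by linarith
  have hrμ1 : (0:ℝ) < r - μ₁ := by linarith
  have hβ0 : (1:ℝ) < β₀ := lt_trans hβ₁ hβ
  have hP : (0:ℝ) < (r - μ₀) * (r - μ₁) := mul_pos hrμ0 hrμ1
  have key : β₁ * (β₀ - 1) * (r - μ₁) < β₀ * (β₁ - 1) * (r - μ₀) := by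
    have hd : β₀ * (β₁ - 1) * (r - μ₀) - β₁ * (β₀ - 1) * (r - μ₁)
        = (β₀ - 1) * (β₁ - 1) * (σ^2 * (β₀ - β₁) / 2) := by
      linear_combination (1 - β₁) * h₀ + (β₀ - 1) * h₁
    nlinarith [mul_pos (mul_pos (mul_pos (sub_pos.mpr hβ0) (sub_pos.mpr hβ₁))
      (sub_pos.mpr hβ)) (mul_pos hσ hσ)]
  set E : ℝ → ℝ := fun π => (β₀ - 1) * (1 - π) * (r - μ₁) + (β₁ - 1) * π * (r - μ₀) with hEdef
  have hE : ∀ π ∈ Set.Icc (0:ℝ) 1, 0 < E π := by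
    intro π hπ
    obtain ⟨h0, h1⟩ := hπ
    rcases lt_or_ge π 1 with h | h
    · have t1 : 0 < (β₀ - 1) * (1 - π) * (r - μ₁) :=
        mul_pos (mul_pos (by linarith) (by linarith)) hrμ1
      have t2 : 0 ≤ (β₁ - 1) * π * (r - μ₀) :=
        mul_nonneg (mul_nonneg (by linarith) h0) hrμ0.le
      simp only [hEdef]; linarith
    · have hπ1 : π = 1 := le_antisymm h1 h
      subst hπ1
      have t2 : 0 < (β₁ - 1) * 1 * (r - μ₀) :=
        mul_pos (mul_pos (by linarith) one_pos) hrμ0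
      simp only [hEdef]; linarith
  have hb' : ∀ π ∈ Set.Icc (0:ℝ) 1, b π
      = (β₀ * (1 - π) + β₁ * π) * I * ((r - μ₀) * (r - μ₁)) / E π := by
    intro π hπ
    have hDeq : (β₀ - 1) * (1 - π)/(r - μ₀) + (β₁ - 1) * π/(r - μ₁)
        = E π / ((r - μ₀) * (r - μ₁)) := by
      field_simp [hEdef]
      try ring
    rw [hb, hDeq, div_div_eq_mul_div]
  have hanti : StrictAntiOn b (Set.Icc 0 1) := by
    intro x hx y hy hxy
    rw [hb' x hx, hb' y hy]
    rw [div_lt_div_iff₀ (hE y hy) (hE x hx)]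
    simp only [hEdef]
    nlinarith [mul_pos (mul_pos (mul_pos hI hP) (sub_pos.mpr hxy)) (sub_pos.mpr key)]
  have hcont : ContinuousOn b (Set.Icc 0 1) := by
    have : ContinuousOn (fun π => (β₀ * (1 - π) + β₁ * π) * I * ((r - μ₀) * (r - μ₁)) / E π)
        (Set.Icc 0 1) := by
      apply ContinuousOn.div
      · fun_prop
      · fun_prop
      · intro π hπ; exact ne_of_gt (hE π hπ)
    exact this.congr hb'
  have hb0 : b 0 = (β₀/(β₀-1)) * (r-μ₀) * I := by
    rw [hb]
    have h01 : (β₀ - 1) ≠ 0 := by linarith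
    field_simp
    ring
  have hb1 : b 1 = (β₁/(β₁-1)) * (r-μ₁) * I := by
    rw [hb]
    have h01 : (β₁ - 1) ≠ 0 := by linarith
    field_simp
    ring
  refine ⟨hanti, hcont, hb0, hb1, ?_⟩
  apply Set.Subset.antisymm
  · rintro _ ⟨x, hx, rfl⟩
    have h1m : (1:ℝ) ∈ Set.Icc (0:ℝ) 1 := Set.right_mem_Icc.mpr zero_le_one
    have h0m : (0:ℝ) ∈ Set.Icc (0:ℝ) 1 := Set.left_mem_Icc.mpr zero_le_one
    constructor
    · rw [← hb1]; exact hanti.antitoneOn hx h1m hx.2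
    · rw [← hb0]; exact hanti.antitoneOn h0m hx hx.1
  · rw [← hb0, ← hb1]
    exact intermediate_value_Icc' zero_le_one hcont
end

section
/- For each π ∈ [0,1], the quantity (b̲(π) − x₁*)/(x₀* − x₁*) equals (1−π)/(1−π + π·c), where c = ((β₁−1)/(β₀−1))·((r−μ₀)/(r−μ₁)) ∈ (0,1). In particular b̲(π) ∈ [x₁*, x₀*]. -/
set_option maxHeartbeats 1000000


/-- (b̲(π) − x₁*)/(x₀* − x₁*) = (1−π)/(1−π+πc) with
c = ((β₁−1)/(β₀−1))·((r−μ₀)/(r−μ₁)) ∈ (0,1); in particular b̲(π) ∈ [x₁*, x₀*]. -/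
theorem lower_bound_ratio_formula (r σ μ₀ μ₁ I β₀ β₁ : ℝ)
    (hr : 0 < r) (hσ : 0 < σ) (hμ : μ₀ < μ₁) (hμr : μ₁ < r) (hI : 0 < I)
    (hβ : β₀ > β₁) (hβ₁ : 1 < β₁)
    (h₀ : (1/2) * σ^2 * β₀ * (β₀ - 1) + μ₀ * β₀ - r = 0)
    (h₁ : (1/2) * σ^2 * β₁ * (β₁ - 1) + μ₁ * β₁ - r = 0)
    (b : ℝ → ℝ)
    (hb : ∀ π : ℝ, b π =
      (β₀ * (1 - π) + β₁ * π) * I /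
        ((β₀ - 1) * (1 - π)/(r - μ₀) + (β₁ - 1) * π/(r - μ₁)))
    (c : ℝ) (hc : c = ((β₁ - 1)/(β₀ - 1)) * ((r - μ₀)/(r - μ₁))) :
    c ∈ Set.Ioo (0:ℝ) 1 ∧
    ∀ π ∈ Set.Icc (0:ℝ) 1,
      (b π - (β₁/(β₁-1)) * (r-μ₁) * I) /
          ((β₀/(β₀-1)) * (r-μ₀) * I - (β₁/(β₁-1)) * (r-μ₁) * I)
        = (1 - π) / (1 - π + π * c) ∧
      b π ∈ Set.Icc ((β₁/(β₁-1)) * (r-μ₁) * I) ((β₀/(β₀-1)) * (r-μ₀) * I) := by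
  have hβ₀ : 1 < β₀ := lt_trans hβ₁ hβ
  have hβ₀1 : (0:ℝ) < β₀ - 1 := by linarith
  have hβ₁1 : (0:ℝ) < β₁ - 1 := by linarith
  have hrμ₀ : (0:ℝ) < r - μ₀ := by linarith
  have hrμ₁ : (0:ℝ) < r - μ₁ := by linarith
  obtain ⟨A₀, hA₀def⟩ : ∃ x : ℝ, x = σ^2/2*β₀ + μ₀ := ⟨_, rfl⟩
  obtain ⟨A₁, hA₁def⟩ : ∃ x : ℝ, x = σ^2/2*β₁ + μ₁ := ⟨_, rfl⟩
  have e₀ : r - μ₀ = (β₀ - 1) * A₀ := by rw [hA₀def]; linear_combination -h₀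
  have e₁ : r - μ₁ = (β₁ - 1) * A₁ := by rw [hA₁def]; linear_combination -h₁
  have hA₀ : 0 < A₀ := by nlinarith
  have hA₁ : 0 < A₁ := by nlinarith
  -- key identity: (A₁ - A₀) β₀ β₁ = (β₀ - β₁) r
  have key : (A₁ - A₀) * (β₀ * β₁) = (β₀ - β₁) * r := by
    rw [hA₀def, hA₁def]; linear_combination β₀ * h₁ - β₁ * h₀
  have hβ₀pos : (0:ℝ) < β₀ := by linarith
  have hβ₁pos : (0:ℝ) < β₁ := by linarith
  have hAlt : A₀ < A₁ := by
    by_contra h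
    push_neg at h
    have h1 : (A₁ - A₀) * (β₀ * β₁) ≤ 0 :=
      mul_nonpos_iff.mpr (Or.inr ⟨by linarith, by positivity⟩)
    nlinarith [mul_pos (sub_pos.mpr hβ) hr]
  have hcA : c = A₀ / A₁ := by
    rw [hc, e₀, e₁]
    field_simp
  have hc0 : 0 < c := by rw [hcA]; positivity
  have hc1 : c < 1 := by rw [hcA]; exact (div_lt_one hA₁).mpr hAlt
  have xdiff : β₀ * A₀ - β₁ * A₁ = σ^2/2 * (β₀ - β₁) := by
    rw [hA₀def, hA₁def]; linear_combination h₀ - h₁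
  have hx₀ : (β₀/(β₀-1)) * (r-μ₀) * I = β₀ * A₀ * I := by
    rw [e₀]; field_simp
  have hx₁ : (β₁/(β₁-1)) * (r-μ₁) * I = β₁ * A₁ * I := by
    rw [e₁]; field_simp
  have hxd : (0:ℝ) < β₀ * A₀ * I - β₁ * A₁ * I := by
    have : β₀ * A₀ * I - β₁ * A₁ * I = (σ^2/2 * (β₀ - β₁)) * I := by
      rw [← xdiff]; ring
    rw [this]
    exact mul_pos (mul_pos (by positivity) (sub_pos.mpr hβ)) hI
  refine ⟨⟨hc0, hc1⟩, ?_⟩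
  intro π hπ
  obtain ⟨hπ0, hπ1⟩ := hπ
  have hE : (0:ℝ) < (1 - π) * A₁ + π * A₀ := by
    have h1 : (1 - π) * A₀ ≤ (1 - π) * A₁ := mul_le_mul_of_nonneg_left hAlt.le (by linarith)
    have h2 : (1 - π) * A₀ + π * A₀ = A₀ := by ring
    linarith
  have hdenc : (0:ℝ) < 1 - π + π * c := by
    have h3 : (1 - π) * c ≤ (1 - π) * 1 := mul_le_mul_of_nonneg_left hc1.le (by linarith)
    have h4 : (1 - π) * c + π * c = c := by ring
    linarith
  have hDenom : (β₀ - 1) * (1 - π)/((β₀-1)*A₀) + (β₁ - 1) * π/((β₁-1)*A₁)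
      = ((1 - π) * A₁ + π * A₀)/(A₀*A₁) := by
    field_simp
  have bval : b π = (β₀ * (1 - π) + β₁ * π) * I * (A₀ * A₁) / ((1 - π) * A₁ + π * A₀) := by
    rw [hb π, e₀, e₁, hDenom, div_div_eq_mul_div]
  have hdenc' : (0:ℝ) < 1 - π + π * (A₀ / A₁) := by rw [← hcA]; exact hdenc
  have main : (b π - (β₁/(β₁-1)) * (r-μ₁) * I) /
      ((β₀/(β₀-1)) * (r-μ₀) * I - (β₁/(β₁-1)) * (r-μ₁) * I)
      = (1 - π) / (1 - π + π * c) := by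
    rw [bval, hx₀, hx₁, hcA]
    rw [div_eq_div_iff hxd.ne' hdenc'.ne']
    field_simp
    ring
  refine ⟨main, ?_⟩
  have hbx : b π - β₁ * A₁ * I = ((1 - π) / (1 - π + π * c)) * (β₀ * A₀ * I - β₁ * A₁ * I) := by
    have h := main
    rw [hx₀, hx₁] at h
    rw [← h]
    field_simp
    rw [mul_div_assoc, div_self (by rw [xdiff]; exact (mul_pos (by positivity) (sub_pos.mpr hβ)).ne'), mul_one]
  have ht0 : 0 ≤ (1 - π) / (1 - π + π * c) :=
    div_nonneg (by linarith) (le_of_lt hdenc)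
  have ht1 : (1 - π) / (1 - π + π * c) ≤ 1 := by
    rw [div_le_one hdenc]
    nlinarith
  rw [hx₀, hx₁]
  have h5 : 0 ≤ (1 - π) / (1 - π + π * c) * (β₀ * A₀ * I - β₁ * A₁ * I) :=
    mul_nonneg ht0 hxd.le
  have h6 : (1 - π) / (1 - π + π * c) * (β₀ * A₀ * I - β₁ * A₁ * I)
      ≤ β₀ * A₀ * I - β₁ * A₁ * I := mul_le_of_le_one_left hxd.le ht1
  exact ⟨by linarith, by linarith⟩
end

section
/- Let r > 0, σ > 0, μ₁ < r, I > 0, β₁ > 1 with (1/2)σ²β₁(β₁−1) + μ₁β₁ − r = 0, x₁* = (β₁/(β₁−1))(r−μ₁)I, and δ > 1. Set x = δ·x₁* and g(y) := y/(r−μ₁) − I. Then δ^{−β₁} g(x) − g(x₁*) < 0. -/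
/-- With x₁* = (β₁/(β₁−1))(r−μ₁)I, x = δx₁*, g(y) = y/(r−μ₁) − I and δ > 1,
one has δ^{−β₁} g(x) − g(x₁*) < 0. -/
theorem discounted_payoff_strictly_worse (r σ μ₁ I β₁ δ : ℝ)
    (hr : 0 < r) (hσ : 0 < σ) (hμ : μ₁ < r) (hI : 0 < I)
    (hβ : 1 < β₁) (hq : (1/2) * σ^2 * β₁ * (β₁ - 1) + μ₁ * β₁ - r = 0)
    (hδ : 1 < δ) :
    δ ^ (-β₁) * ((δ * ((β₁/(β₁-1)) * (r-μ₁) * I)) / (r - μ₁) - I)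
      - (((β₁/(β₁-1)) * (r-μ₁) * I) / (r - μ₁) - I) < 0 := by
  have hrμ : (0:ℝ) < r - μ₁ := by linarith
  have hb1 : (0:ℝ) < β₁ - 1 := by linarith
  -- Bernoulli: β₁δ - (β₁-1) < δ^β₁
  have hbern : 1 + β₁ * (δ - 1) < δ ^ β₁ := by
    have := one_add_mul_self_lt_rpow_one_add (s := δ - 1) (by linarith) (by linarith) hβ
    simpa using this
  have hδβpos : (0:ℝ) < δ ^ β₁ := Real.rpow_pos_of_pos (by linarith) _
  have hneg : δ ^ (-β₁) = (δ ^ β₁)⁻¹ := Real.rpow_neg (by linarith) _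
  have key : δ ^ (-β₁) * (β₁ * δ - (β₁ - 1)) < 1 := by
    rw [hneg]
    rw [inv_mul_lt_iff₀ hδβpos, mul_one]
    nlinarith
  have hsimp : (δ * ((β₁/(β₁-1)) * (r-μ₁) * I)) / (r - μ₁) - I
      = (I / (β₁ - 1)) * (β₁ * δ - (β₁ - 1)) := by
    field_simp
  have hsimp2 : ((β₁/(β₁-1)) * (r-μ₁) * I) / (r - μ₁) - I = (I / (β₁ - 1)) := by
    field_simp; ring
  rw [hsimp, hsimp2]
  have hIb : 0 < I / (β₁ - 1) := div_pos hI hb1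
  have hpos : 0 < δ ^ (-β₁) := Real.rpow_pos_of_pos (by linarith) _
  nlinarith [mul_lt_mul_of_pos_left key hIb]
end
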